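/- arXiv:2507.22332 — 10 statements merged into one kernel-verified Lean document; each statement's English description precedes it below -/
import Mathlib

section
/- Let I ⊆ ℝ be an interval and let y, z : ℝ → ℝ be twice differentiable on I and satisfy y''(s) = (1 − 2·y(s)² − 8·z(s)²)·y(s) and z''(s) = (4 − 2·y(s)² − 8·z(s)²)·z(s) for all s ∈ I. Then the function s ↦ (y(s)² + 4·z(s)²)² − y(s)² − 16·z(s)² + y'(s)² + 4·z'(s)² has derivative identically zero on I, hence is constant on I. -/
/-!
Along any path `(y, z)` with velocity `(p, q)`, the derivative of `H₁` is
`2 p (p' - (1 - 2y² - 8z²) y) + 8 q (q' - (4 - 2y² - 8z²) z)`: the system is Newton's law for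
masses `1, 4` in the potential `((y² + 4z²)² - y² - 16z²) / 2`, and `H₁` is twice its energy.
So `H₁` has derivative zero along solutions, and a function with zero derivative on an interval
is constant there by the mean value inequality.
-/

theorem Set.OrdConnected.eq_of_hasDerivAt_eq_zero {E : Type*} [NormedAddCommGroup E]
    [NormedSpace ℝ E] {s : Set ℝ} (hs : s.OrdConnected) {f : ℝ → E}
    (hf : ∀ x ∈ s, HasDerivAt f 0 x) {x y : ℝ} (hx : x ∈ s) (hy : y ∈ s) : f x = f y := by
  have h := hs.convex.norm_image_sub_le_of_norm_hasDerivWithin_le (C := 0)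
    (fun t ht => (hf t ht).hasDerivWithinAt) (fun _ _ => norm_zero.le) hy hx
  rwa [zero_mul, norm_le_zero_iff, sub_eq_zero] at h

def egjH1 (y z y' z' : ℝ) : ℝ :=
  (y ^ 2 + 4 * z ^ 2) ^ 2 - y ^ 2 - 16 * z ^ 2 + y' ^ 2 + 4 * z' ^ 2

theorem HasDerivAt.egjH1 {y z p q : ℝ → ℝ} {p' q' s : ℝ} (hy : HasDerivAt y (p s) s)
    (hz : HasDerivAt z (q s) s) (hp : HasDerivAt p p' s) (hq : HasDerivAt q q' s) :
    HasDerivAt (fun t => egjH1 (y t) (z t) (p t) (q t))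
      (2 * p s * (p' - (1 - 2 * y s ^ 2 - 8 * z s ^ 2) * y s)
        + 8 * q s * (q' - (4 - 2 * y s ^ 2 - 8 * z s ^ 2) * z s)) s := by
  refine (((((((hy.fun_pow 2).fun_add ((hz.fun_pow 2).const_mul 4)).fun_pow 2).fun_sub
    (hy.fun_pow 2)).fun_sub ((hz.fun_pow 2).const_mul 16)).fun_add (hp.fun_pow 2)).fun_add
      ((hq.fun_pow 2).const_mul 4)).congr_deriv ?_
  push_cast
  ring

/-- **First integral H₁ of the EGJ system.**
If `y, z` are twice differentiable on an interval `I ⊆ ℝ` (with derivatives `y', y''`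
and `z', z''`) and satisfy the EGJ system
`y'' = (1 − 2y² − 8z²)·y`, `z'' = (4 − 2y² − 8z²)·z` on `I`, then the function
`H₁ = (y² + 4z²)² − y² − 16z² + (y')² + 4(z')²` has derivative identically zero on `I`,
hence is constant on `I`. -/
theorem egj_first_integral_H1
    (I : Set ℝ) (hI : I.OrdConnected)
    (y z y' z' y'' z'' : ℝ → ℝ)
    (hy : ∀ s ∈ I, HasDerivAt y (y' s) s)
    (hy' : ∀ s ∈ I, HasDerivAt y' (y'' s) s)
    (hz : ∀ s ∈ I, HasDerivAt z (z' s) s)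
    (hz' : ∀ s ∈ I, HasDerivAt z' (z'' s) s)
    (hODEy : ∀ s ∈ I, y'' s = (1 - 2 * (y s) ^ 2 - 8 * (z s) ^ 2) * y s)
    (hODEz : ∀ s ∈ I, z'' s = (4 - 2 * (y s) ^ 2 - 8 * (z s) ^ 2) * z s) :
    (∀ s ∈ I, HasDerivAt
      (fun s => ((y s) ^ 2 + 4 * (z s) ^ 2) ^ 2 - (y s) ^ 2 - 16 * (z s) ^ 2
        + (y' s) ^ 2 + 4 * (z' s) ^ 2) 0 s) ∧
    (∀ s ∈ I, ∀ t ∈ I,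
      ((y s) ^ 2 + 4 * (z s) ^ 2) ^ 2 - (y s) ^ 2 - 16 * (z s) ^ 2
        + (y' s) ^ 2 + 4 * (z' s) ^ 2
      = ((y t) ^ 2 + 4 * (z t) ^ 2) ^ 2 - (y t) ^ 2 - 16 * (z t) ^ 2
        + (y' t) ^ 2 + 4 * (z' t) ^ 2) := by
  have hH : ∀ s ∈ I, HasDerivAt (fun t => egjH1 (y t) (z t) (y' t) (z' t)) 0 s := by
    intro s hs
    simpa only [hODEy s hs, hODEz s hs, sub_self, mul_zero, add_zero] using
      (hy s hs).egjH1 (hz s hs) (hy' s hs) (hz' s hs)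
  exact ⟨hH, fun s hs t ht => hI.eq_of_hasDerivAt_eq_zero hH hs ht⟩
end

section
/- Let I ⊆ ℝ be an interval and let y, z : ℝ → ℝ be twice differentiable on I and satisfy y''(s) = (1 − 2·y(s)² − 8·z(s)²)·y(s) and z''(s) = (4 − 2·y(s)² − 8·z(s)²)·z(s) for all s ∈ I. Then the function s ↦ 12·z(s)²·(z(s)² − 1) + 3·y(s)²·z(s)² + z(s)²·y'(s)² − 2·y(s)·y'(s)·z(s)·z'(s) + (3 + y(s)²)·z'(s)² has derivative identically zero on I, hence is constant on I. -/
/-! Differentiating `H₂` along a solution by the chain rule and substituting the two equations of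
the system for `y''` and `z''` gives a polynomial in `y, z, y', z'` that vanishes identically. -/

theorem Convex.eq_of_forall_hasDerivWithinAt_zero {E : Type*} [NormedAddCommGroup E]
    [NormedSpace ℝ E] {f : ℝ → E} {s : Set ℝ} (hs : Convex ℝ s)
    (hf : ∀ x ∈ s, HasDerivWithinAt f 0 s x) {x y : ℝ} (hx : x ∈ s) (hy : y ∈ s) :
    f x = f y := by
  have h := hs.norm_image_sub_le_of_norm_hasDerivWithin_le hf (C := 0) (by simp) hx hy
  rw [zero_mul, norm_le_zero_iff, sub_eq_zero] at h
  exact h.symm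

namespace EGJ

def H₂ (y z p q : ℝ) : ℝ :=
  12 * z ^ 2 * (z ^ 2 - 1) + 3 * y ^ 2 * z ^ 2 + z ^ 2 * p ^ 2 - 2 * y * p * z * q
    + (3 + y ^ 2) * q ^ 2

theorem hasDerivAt_H₂_comp {y z p q : ℝ → ℝ} {y' z' p' q' s : ℝ}
    (hy : HasDerivAt y y' s) (hz : HasDerivAt z z' s) (hp : HasDerivAt p p' s)
    (hq : HasDerivAt q q' s) :
    HasDerivAt (fun s => H₂ (y s) (z s) (p s) (q s))
      ((6 * y s * z s ^ 2 - 2 * p s * z s * q s + 2 * y s * q s ^ 2) * y'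
        + (48 * z s ^ 3 - 24 * z s + 6 * y s ^ 2 * z s + 2 * z s * p s ^ 2
            - 2 * y s * p s * q s) * z'
        + (2 * z s ^ 2 * p s - 2 * y s * z s * q s) * p'
        + (2 * (3 + y s ^ 2) * q s - 2 * y s * p s * z s) * q') s := by
  have h := ((((hz.pow 2).const_mul 12).mul ((hz.pow 2).sub_const 1)
    |>.add (((hy.pow 2).const_mul 3).mul (hz.pow 2))
    |>.add ((hz.pow 2).mul (hp.pow 2))
    |>.sub ((((hy.const_mul 2).mul hp).mul hz).mul hq)
    |>.add (((hy.pow 2).const_add 3).mul (hq.pow 2))))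
  exact h.congr_deriv (by simp only [Pi.mul_apply, Pi.pow_apply]; ring)

theorem orbital_deriv_H₂_eq_zero (y z p q : ℝ) :
    (6 * y * z ^ 2 - 2 * p * z * q + 2 * y * q ^ 2) * p
      + (48 * z ^ 3 - 24 * z + 6 * y ^ 2 * z + 2 * z * p ^ 2 - 2 * y * p * q) * q
      + (2 * z ^ 2 * p - 2 * y * z * q) * ((1 - 2 * y ^ 2 - 8 * z ^ 2) * y)
      + (2 * (3 + y ^ 2) * q - 2 * y * p * z) * ((4 - 2 * y ^ 2 - 8 * z ^ 2) * z) = 0 := by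
  ring

end EGJ

/-- **First integral H₂ of the EGJ system.**
If `y, z` are twice differentiable on an interval `I ⊆ ℝ` and satisfy the EGJ system
`y'' = (1 − 2y² − 8z²)·y`, `z'' = (4 − 2y² − 8z²)·z` on `I`, then the function
`H₂ = 12z²(z² − 1) + 3y²z² + z²(y')² − 2yy'zz' + (3 + y²)(z')²` has derivative
identically zero on `I`, hence is constant on `I`. -/
theorem egj_first_integral_H2
    (I : Set ℝ) (hI : I.OrdConnected)
    (y z y' z' y'' z'' : ℝ → ℝ)
    (hy : ∀ s ∈ I, HasDerivAt y (y' s) s)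
    (hy' : ∀ s ∈ I, HasDerivAt y' (y'' s) s)
    (hz : ∀ s ∈ I, HasDerivAt z (z' s) s)
    (hz' : ∀ s ∈ I, HasDerivAt z' (z'' s) s)
    (hODEy : ∀ s ∈ I, y'' s = (1 - 2 * (y s) ^ 2 - 8 * (z s) ^ 2) * y s)
    (hODEz : ∀ s ∈ I, z'' s = (4 - 2 * (y s) ^ 2 - 8 * (z s) ^ 2) * z s) :
    (∀ s ∈ I, HasDerivAt
      (fun s => 12 * (z s) ^ 2 * ((z s) ^ 2 - 1) + 3 * (y s) ^ 2 * (z s) ^ 2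
        + (z s) ^ 2 * (y' s) ^ 2 - 2 * y s * y' s * z s * z' s
        + (3 + (y s) ^ 2) * (z' s) ^ 2) 0 s) ∧
    (∀ s ∈ I, ∀ t ∈ I,
      12 * (z s) ^ 2 * ((z s) ^ 2 - 1) + 3 * (y s) ^ 2 * (z s) ^ 2
        + (z s) ^ 2 * (y' s) ^ 2 - 2 * y s * y' s * z s * z' s
        + (3 + (y s) ^ 2) * (z' s) ^ 2
      = 12 * (z t) ^ 2 * ((z t) ^ 2 - 1) + 3 * (y t) ^ 2 * (z t) ^ 2
        + (z t) ^ 2 * (y' t) ^ 2 - 2 * y t * y' t * z t * z' t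
        + (3 + (y t) ^ 2) * (z' t) ^ 2) := by
  have hderiv : ∀ s ∈ I, HasDerivAt (fun s => EGJ.H₂ (y s) (z s) (y' s) (z' s)) 0 s := by
    intro s hs
    convert EGJ.hasDerivAt_H₂_comp (hy s hs) (hz s hs) (hy' s hs) (hz' s hs) using 1
    rw [hODEy s hs, hODEz s hs, EGJ.orbital_deriv_H₂_eq_zero]
  exact ⟨hderiv, fun s hs t ht => hI.convex.eq_of_forall_hasDerivWithinAt_zero
    (fun x hx => (hderiv x hx).hasDerivWithinAt) hs ht⟩
end

section
/- Let a ∈ ℝ, let I ⊆ ℝ be an interval containing 0, and let y, z : ℝ → ℝ be twice differentiable on I with y''(s) = (1 − 2·y(s)² − 8·z(s)²)·y(s), z''(s) = (4 − 2·y(s)² − 8·z(s)²)·z(s) on I, and initial conditions y(0) = 0, y'(0) = 2a, z(0) = a, z'(0) = 0. Then for all s ∈ I: (y(s)² + 4·z(s)²)² − y(s)² − 16·z(s)² + y'(s)² + 4·z'(s)² = −4a²·(3 − 4a²), and 12·z(s)²·(z(s)² − 1) + 3·y(s)²·z(s)² + z(s)²·y'(s)² − 2·y(s)·y'(s)·z(s)·z'(s)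 + (3 + y(s)²)·z'(s)² = −4a²·(3 − 4a²). -/
/-!
Both quantities are polynomial first integrals of the EGJ system: along any curve, the derivative
of each is a linear combination of the residuals `y'' - (1 - 2y² - 8z²)y` and
`z'' - (4 - 2y² - 8z²)z`, so along a solution it vanishes and, by the mean value theorem, the
quantity is constant on the interval. Evaluating at `s = 0` with the EGJ initial data gives
`-4a²(3 - 4a²)` in both cases.
-/

theorem Convex.is_const_of_hasDerivAt_zero {s : Set ℝ} (hs : Convex ℝ s) {f : ℝ → ℝ}
    (hf : ∀ x ∈ s, HasDerivAt f 0 x) {x y : ℝ} (hx : x ∈ s) (hy : y ∈ s) : f x = f y := by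
  have h := norm_image_sub_le_of_norm_hasDerivWithin_le (C := 0)
    (fun t ht => (hf t ht).hasDerivWithinAt) (fun _ _ => norm_zero.le) hs hy hx
  rwa [zero_mul, norm_le_zero_iff, sub_eq_zero] at h

namespace EGJ

def energy (y z y' z' : ℝ) : ℝ :=
  (y ^ 2 + 4 * z ^ 2) ^ 2 - y ^ 2 - 16 * z ^ 2 + y' ^ 2 + 4 * z' ^ 2

def secondIntegral (y z y' z' : ℝ) : ℝ :=
  12 * z ^ 2 * (z ^ 2 - 1) + 3 * y ^ 2 * z ^ 2 + z ^ 2 * y' ^ 2 - 2 * y * y' * z * z'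
    + (3 + y ^ 2) * z' ^ 2

def forceY (y z : ℝ) : ℝ := (1 - 2 * y ^ 2 - 8 * z ^ 2) * y

def forceZ (y z : ℝ) : ℝ := (4 - 2 * y ^ 2 - 8 * z ^ 2) * z

variable {y z y' z' y'' z'' : ℝ → ℝ} {s : ℝ}

theorem hasDerivAt_energy (hy : HasDerivAt y (y' s) s) (hy' : HasDerivAt y' (y'' s) s)
    (hz : HasDerivAt z (z' s) s) (hz' : HasDerivAt z' (z'' s) s) :
    HasDerivAt (fun t => energy (y t) (z t) (y' t) (z' t))
      (2 * y' s * (y'' s - forceY (y s) (z s)) + 8 * z' s * (z'' s - forceZ (y s) (z s))) s := by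
  have h := ((((((hy.pow 2).add ((hz.pow 2).const_mul 4)).pow 2).sub (hy.pow 2)).sub
    ((hz.pow 2).const_mul 16)).add (hy'.pow 2)).add ((hz'.pow 2).const_mul 4)
  refine h.congr_deriv ?_
  simp only [forceY, forceZ, Pi.add_apply, Pi.pow_apply]
  push_cast
  ring

theorem hasDerivAt_secondIntegral (hy : HasDerivAt y (y' s) s)
    (hy' : HasDerivAt y' (y'' s) s) (hz : HasDerivAt z (z' s) s)
    (hz' : HasDerivAt z' (z'' s) s) :
    HasDerivAt (fun t => secondIntegral (y t) (z t) (y' t) (z' t))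
      (2 * z s * (z s * y' s - y s * z' s) * (y'' s - forceY (y s) (z s))
        + 2 * ((3 + y s ^ 2) * z' s - y s * y' s * z s) * (z'' s - forceZ (y s) (z s))) s := by
  have h := ((((((hz.pow 2).const_mul 12).mul ((hz.pow 2).sub_const 1)).add
    (((hy.pow 2).const_mul 3).mul (hz.pow 2))).add ((hz.pow 2).mul (hy'.pow 2))).sub
    ((((hy.const_mul 2).mul hy').mul hz).mul hz')).add
    (((hy.pow 2).const_add 3).mul (hz'.pow 2))
  refine h.congr_deriv ?_
  simp only [forceY, forceZ, Pi.mul_apply, Pi.pow_apply]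
  push_cast
  ring

end EGJ

open EGJ in
/-- **Values of the first integrals along EGJ solutions with the EGJ initial data.**
If `y, z` solve the EGJ system on an interval `I ∋ 0` with `y(0) = 0`, `y'(0) = 2a`,
`z(0) = a`, `z'(0) = 0`, then both first integrals are identically equal to
`−4a²(3 − 4a²)` on `I`. -/
theorem egj_first_integrals_value
    (a : ℝ) (I : Set ℝ) (hI : I.OrdConnected) (h0 : (0 : ℝ) ∈ I)
    (y z y' z' y'' z'' : ℝ → ℝ)
    (hy : ∀ s ∈ I, HasDerivAt y (y' s) s)
    (hy' : ∀ s ∈ I, HasDerivAt y' (y'' s) s)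
    (hz : ∀ s ∈ I, HasDerivAt z (z' s) s)
    (hz' : ∀ s ∈ I, HasDerivAt z' (z'' s) s)
    (hODEy : ∀ s ∈ I, y'' s = (1 - 2 * (y s) ^ 2 - 8 * (z s) ^ 2) * y s)
    (hODEz : ∀ s ∈ I, z'' s = (4 - 2 * (y s) ^ 2 - 8 * (z s) ^ 2) * z s)
    (hy0 : y 0 = 0) (hy'0 : y' 0 = 2 * a) (hz0 : z 0 = a) (hz'0 : z' 0 = 0) :
    ∀ s ∈ I,
      ((y s) ^ 2 + 4 * (z s) ^ 2) ^ 2 - (y s) ^ 2 - 16 * (z s) ^ 2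
          + (y' s) ^ 2 + 4 * (z' s) ^ 2 = -(4 * a ^ 2 * (3 - 4 * a ^ 2)) ∧
      12 * (z s) ^ 2 * ((z s) ^ 2 - 1) + 3 * (y s) ^ 2 * (z s) ^ 2
          + (z s) ^ 2 * (y' s) ^ 2 - 2 * y s * y' s * z s * z' s
          + (3 + (y s) ^ 2) * (z' s) ^ 2 = -(4 * a ^ 2 * (3 - 4 * a ^ 2)) := by
  have residualY : ∀ s ∈ I, y'' s - forceY (y s) (z s) = 0 := fun s hs => by
    rw [hODEy s hs, forceY, sub_self]
  have residualZ : ∀ s ∈ I, z'' s - forceZ (y s) (z s) = 0 := fun s hs => by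
    rw [hODEz s hs, forceZ, sub_self]
  have energy_deriv_zero : ∀ s ∈ I, HasDerivAt (fun t => energy (y t) (z t) (y' t) (z' t)) 0 s :=
    fun s hs => by
      simpa [residualY s hs, residualZ s hs] using
        hasDerivAt_energy (hy s hs) (hy' s hs) (hz s hs) (hz' s hs)
  have second_deriv_zero :
      ∀ s ∈ I, HasDerivAt (fun t => secondIntegral (y t) (z t) (y' t) (z' t)) 0 s :=
    fun s hs => by
      simpa [residualY s hs, residualZ s hs] using
        hasDerivAt_secondIntegral (hy s hs) (hy' s hs) (hz s hs) (hz' s hs)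
  intro s hs
  have e1 := hI.convex.is_const_of_hasDerivAt_zero energy_deriv_zero hs h0
  have e2 := hI.convex.is_const_of_hasDerivAt_zero second_deriv_zero hs h0
  simp only [energy, secondIntegral, hy0, hy'0, hz0, hz'0] at e1 e2
  constructor
  · rw [e1]; ring
  · rw [e2]; ring
end

section
/- Let a ∈ ℝ, let I ⊆ ℝ be an interval containing 0, and let y, z : ℝ → ℝ be twice differentiable on I with y''(s) = (1 − 2·y(s)² − 8·z(s)²)·y(s), z''(s) = (4 − 2·y(s)² − 8·z(s)²)·z(s) on I, and y(0) = 0, y'(0) = 2a, z(0) = a, z'(0) = 0. Then for every s ∈ I: (y(s)·y'(s) + z(s)·z'(s))² + (1 − y(s)² − z(s)²)·(y'(s)² + z'(s)²) = (1 − y(s)² − z(s)²)·(y(s)² + 4·z(s)²). -/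
/-!
The defect `(yy' + zz')² + (1 − y² − z²)((y')² + (z')²) − (1 − y² − z²)(y² + 4z²)` is a first
integral of the EGJ system: differentiating it along a solution and substituting the equations
for `y''` and `z''` gives a polynomial that vanishes identically. It vanishes at the EGJ initial
data `(y, z, y', z') = (0, a, 2a, 0)`, hence on the whole interval, by the mean value theorem.
-/

theorem Convex.is_const_of_hasDerivWithinAt_zero {𝕜 G : Type*} [RCLike 𝕜]
    [NormedAddCommGroup G] [NormedSpace 𝕜 G] {f : 𝕜 → G} {s : Set 𝕜} (hs : Convex ℝ s)
    (hf : ∀ x ∈ s, HasDerivWithinAt f 0 s x) {x y : 𝕜} (hx : x ∈ s) (hy : y ∈ s) :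
    f x = f y := by
  have h := hs.norm_image_sub_le_of_norm_hasDerivWithin_le hf (C := 0) (by simp) hy hx
  rwa [zero_mul, norm_le_zero_iff, sub_eq_zero] at h

def egjConformalDefect (y z y' z' : ℝ) : ℝ :=
  (y * y' + z * z') ^ 2 + (1 - y ^ 2 - z ^ 2) * (y' ^ 2 + z' ^ 2)
    - (1 - y ^ 2 - z ^ 2) * (y ^ 2 + 4 * z ^ 2)

theorem egjConformalDefect_initial (a : ℝ) : egjConformalDefect 0 a (2 * a) 0 = 0 := by
  unfold egjConformalDefect
  ring

theorem hasDerivAt_egjConformalDefect {y z y' z' : ℝ → ℝ} {s : ℝ}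
    (hy : HasDerivAt y (y' s) s) (hz : HasDerivAt z (z' s) s)
    (hy' : HasDerivAt y' ((1 - 2 * y s ^ 2 - 8 * z s ^ 2) * y s) s)
    (hz' : HasDerivAt z' ((4 - 2 * y s ^ 2 - 8 * z s ^ 2) * z s) s) :
    HasDerivAt (fun t => egjConformalDefect (y t) (z t) (y' t) (z' t)) 0 s := by
  have hfactor := ((hasDerivAt_const s (1 : ℝ)).sub (hy.pow 2)).sub (hz.pow 2)
  have h := ((((hy.mul hy').add (hz.mul hz')).pow 2).add
      (hfactor.mul ((hy'.pow 2).add (hz'.pow 2)))).sub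
    (hfactor.mul ((hy.pow 2).add ((hasDerivAt_const s (4 : ℝ)).mul (hz.pow 2))))
  refine h.congr_deriv ?_
  simp only [Pi.add_apply, Pi.mul_apply, Pi.pow_apply, Pi.sub_apply]
  ring

/-- **Coordinate-free form of the conformal-factor relation.**
If `y, z` solve the EGJ system on an interval `I ∋ 0` with `y(0) = 0`, `y'(0) = 2a`,
`z(0) = a`, `z'(0) = 0`, then for every `s ∈ I`,
`(yy' + zz')² + (1 − y² − z²)((y')² + (z')²) = (1 − y² − z²)(y² + 4z²)`. -/
theorem egj_conformal_factor_identity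
    (a : ℝ) (I : Set ℝ) (hI : I.OrdConnected) (h0 : (0 : ℝ) ∈ I)
    (y z y' z' y'' z'' : ℝ → ℝ)
    (hy : ∀ s ∈ I, HasDerivAt y (y' s) s)
    (hy' : ∀ s ∈ I, HasDerivAt y' (y'' s) s)
    (hz : ∀ s ∈ I, HasDerivAt z (z' s) s)
    (hz' : ∀ s ∈ I, HasDerivAt z' (z'' s) s)
    (hODEy : ∀ s ∈ I, y'' s = (1 - 2 * (y s) ^ 2 - 8 * (z s) ^ 2) * y s)
    (hODEz : ∀ s ∈ I, z'' s = (4 - 2 * (y s) ^ 2 - 8 * (z s) ^ 2) * z s)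
    (hy0 : y 0 = 0) (hy'0 : y' 0 = 2 * a) (hz0 : z 0 = a) (hz'0 : z' 0 = 0) :
    ∀ s ∈ I,
      (y s * y' s + z s * z' s) ^ 2
        + (1 - (y s) ^ 2 - (z s) ^ 2) * ((y' s) ^ 2 + (z' s) ^ 2)
      = (1 - (y s) ^ 2 - (z s) ^ 2) * ((y s) ^ 2 + 4 * (z s) ^ 2) := by
  intro s hs
  have hderiv : ∀ t ∈ I,
      HasDerivWithinAt (fun t => egjConformalDefect (y t) (z t) (y' t) (z' t)) 0 I t :=
    fun t ht => (hasDerivAt_egjConformalDefect (hy t ht) (hz t ht)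
      (hODEy t ht ▸ hy' t ht) (hODEz t ht ▸ hz' t ht)).hasDerivWithinAt
  have hconst := hI.convex.is_const_of_hasDerivWithinAt_zero hderiv hs h0
  rw [hy0, hy'0, hz0, hz'0, egjConformalDefect_initial] at hconst
  exact sub_eq_zero.mp hconst
end

section
/- Let a ∈ ℝ, let I ⊆ ℝ be an interval containing 0, and let y, z : ℝ → ℝ be twice differentiable on I with y''(s) = (1 − 2·y(s)² − 8·z(s)²)·y(s), z''(s) = (4 − 2·y(s)² − 8·z(s)²)·z(s) on I, and y(0) = 0, y'(0) = 2a, z(0) = a, z'(0) = 0. Assume moreover y(s)² + z(s)² < 1 for all s ∈ I, and define x(s) = √(1 − y(s)² − z(s)²). Then x is differentiable on I and for all s ∈ I: x'(s)² + y'(s)² + z'(s)² = y(s)² + 4·z(s)². -/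
/-!
With `x = √(1 - y² - z²)` we have `x x' = -(y y' + z z')`, so the claimed identity, multiplied
by `x² > 0`, says that
`H = (y y' + z z')² - (y² + 4z² - y'² - z'²)(1 - y² - z²)`
vanishes. Along solutions of the EGJ system `H` is a first integral, and the EGJ initial data
give `H(0) = 0`; hence `H = 0` on the whole interval.
-/

open Real

def egjFirstIntegral (y z v w : ℝ) : ℝ :=
  (y * v + z * w) ^ 2 - (y ^ 2 + 4 * z ^ 2 - v ^ 2 - w ^ 2) * (1 - y ^ 2 - z ^ 2)

theorem egjFirstIntegral_initial (a : ℝ) : egjFirstIntegral 0 a (2 * a) 0 = 0 := by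
  unfold egjFirstIntegral
  ring

theorem hasDerivAt_egjFirstIntegral {y z v w : ℝ → ℝ} {s : ℝ}
    (hy : HasDerivAt y (v s) s) (hz : HasDerivAt z (w s) s)
    (hv : HasDerivAt v ((1 - 2 * y s ^ 2 - 8 * z s ^ 2) * y s) s)
    (hw : HasDerivAt w ((4 - 2 * y s ^ 2 - 8 * z s ^ 2) * z s) s) :
    HasDerivAt (fun t => egjFirstIntegral (y t) (z t) (v t) (w t)) 0 s := by
  unfold egjFirstIntegral
  have hdot := (hy.fun_mul hv).fun_add (hz.fun_mul hw)
  have hpot := (((hy.fun_pow 2).fun_add ((hz.fun_pow 2).const_mul 4)).fun_sub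
    (hv.fun_pow 2)).fun_sub (hw.fun_pow 2)
  have hsq := ((hasDerivAt_const s 1).fun_sub (hy.fun_pow 2)).fun_sub (hz.fun_pow 2)
  refine ((hdot.fun_pow 2).fun_sub (hpot.fun_mul hsq)).congr_deriv ?_
  push_cast
  ring

theorem Convex.apply_eq_of_hasDerivAt_zero {E : Type*} [NormedAddCommGroup E] [NormedSpace ℝ E]
    {I : Set ℝ} (hI : Convex ℝ I) {f : ℝ → E} (hf : ∀ s ∈ I, HasDerivAt f 0 s)
    {s t : ℝ} (hs : s ∈ I) (ht : t ∈ I) : f s = f t := by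
  have h := hI.norm_image_sub_le_of_norm_hasDerivWithin_le (C := 0)
    (fun u hu => (hf u hu).hasDerivWithinAt) (fun _ _ => norm_zero.le) ht hs
  rwa [zero_mul, norm_le_zero_iff, sub_eq_zero] at h

theorem hasDerivAt_sqrt_one_sub_sq_sub_sq {y z : ℝ → ℝ} {v w s : ℝ}
    (hy : HasDerivAt y v s) (hz : HasDerivAt z w s) (hlt : y s ^ 2 + z s ^ 2 < 1) :
    HasDerivAt (fun t => √(1 - y t ^ 2 - z t ^ 2))
      (-(y s * v + z s * w) / √(1 - y s ^ 2 - z s ^ 2)) s := by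
  have hpos : 0 < 1 - y s ^ 2 - z s ^ 2 := by linarith
  have hsq := ((hasDerivAt_const s 1).fun_sub (hy.fun_pow 2)).fun_sub (hz.fun_pow 2)
  refine (hsq.sqrt hpos.ne').congr_deriv ?_
  field_simp
  push_cast
  ring

theorem sq_div_sqrt_add_sq_add_sq_of_egjFirstIntegral_eq_zero {y z v w : ℝ}
    (hlt : y ^ 2 + z ^ 2 < 1) (hH : egjFirstIntegral y z v w = 0) :
    (-(y * v + z * w) / √(1 - y ^ 2 - z ^ 2)) ^ 2 + v ^ 2 + w ^ 2 = y ^ 2 + 4 * z ^ 2 := by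
  have hpos : 0 < 1 - y ^ 2 - z ^ 2 := by linarith
  unfold egjFirstIntegral at hH
  rw [div_pow, neg_sq, sq_sqrt hpos.le, sub_eq_zero.mp hH]
  field_simp
  ring

/-- **Conformal factor relation for `x = √(1 − y² − z²)`.**
If `y, z` solve the EGJ system on an interval `I ∋ 0` with the EGJ initial data and
`y² + z² < 1` on `I`, then `x = √(1 − y² − z²)` is differentiable on `I` and
`(x')² + (y')² + (z')² = y² + 4z²` on `I`. -/
theorem egj_x_derivative_identity
    (a : ℝ) (I : Set ℝ) (hI : I.OrdConnected) (h0 : (0 : ℝ) ∈ I)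
    (y z y' z' y'' z'' : ℝ → ℝ)
    (hy : ∀ s ∈ I, HasDerivAt y (y' s) s)
    (hy' : ∀ s ∈ I, HasDerivAt y' (y'' s) s)
    (hz : ∀ s ∈ I, HasDerivAt z (z' s) s)
    (hz' : ∀ s ∈ I, HasDerivAt z' (z'' s) s)
    (hODEy : ∀ s ∈ I, y'' s = (1 - 2 * (y s) ^ 2 - 8 * (z s) ^ 2) * y s)
    (hODEz : ∀ s ∈ I, z'' s = (4 - 2 * (y s) ^ 2 - 8 * (z s) ^ 2) * z s)
    (hy0 : y 0 = 0) (hy'0 : y' 0 = 2 * a) (hz0 : z 0 = a) (hz'0 : z' 0 = 0)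
    (hlt : ∀ s ∈ I, (y s) ^ 2 + (z s) ^ 2 < 1)
    (x : ℝ → ℝ) (hx : ∀ s, x s = Real.sqrt (1 - (y s) ^ 2 - (z s) ^ 2)) :
    ∃ x' : ℝ → ℝ,
      (∀ s ∈ I, HasDerivAt x (x' s) s) ∧
      ∀ s ∈ I, (x' s) ^ 2 + (y' s) ^ 2 + (z' s) ^ 2 = (y s) ^ 2 + 4 * (z s) ^ 2 := by
  have hH : ∀ s ∈ I, egjFirstIntegral (y s) (z s) (y' s) (z' s) = 0 := fun s hs => by
    have hconst := hI.convex.apply_eq_of_hasDerivAt_zero (fun t ht =>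
      hasDerivAt_egjFirstIntegral (hy t ht) (hz t ht)
        (hODEy t ht ▸ hy' t ht) (hODEz t ht ▸ hz' t ht)) hs h0
    rw [hconst, hy0, hz0, hy'0, hz'0, egjFirstIntegral_initial]
  refine ⟨fun t => -(y t * y' t + z t * z' t) / √(1 - y t ^ 2 - z t ^ 2),
    fun s hs => ?_, fun s hs => ?_⟩
  · rw [funext hx]
    exact hasDerivAt_sqrt_one_sub_sq_sub_sq (hy s hs) (hz s hs) (hlt s hs)
  · exact sq_div_sqrt_add_sq_add_sq_of_egjFirstIntegral_eq_zero (hlt s hs) (hH s hs)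
end

section
/- Let a ∈ (0,1), let I ⊆ ℝ be an interval containing 0, and let x : ℝ → ℝ be twice differentiable on I with x''(s) = −2·(1 + 4a² − x(s)²/(1 − a²))·x(s) for all s ∈ I, x(0) = √(1 − a²), and x'(0) = 0. Then x(s)² ≤ 1 − a² for all s ∈ I. -/
/-- **Confinement of the orbit of the decoupled ODE.**
Let `a ∈ (0,1)` and let `x` solve `x'' = −2(1 + 4a² − x²/(1 − a²))·x` on an interval
`I ∋ 0` with `x(0) = √(1 − a²)`, `x'(0) = 0`. Then `x² ≤ 1 − a²` on `I`. -/
theorem decoupled_ode_confinement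
    (a : ℝ) (ha : a ∈ Set.Ioo (0 : ℝ) 1)
    (I : Set ℝ) (hI : I.OrdConnected) (h0 : (0 : ℝ) ∈ I)
    (x x' x'' : ℝ → ℝ)
    (hx : ∀ s ∈ I, HasDerivAt x (x' s) s)
    (hx' : ∀ s ∈ I, HasDerivAt x' (x'' s) s)
    (hODE : ∀ s ∈ I, x'' s = -2 * (1 + 4 * a ^ 2 - (x s) ^ 2 / (1 - a ^ 2)) * x s)
    (hx0 : x 0 = Real.sqrt (1 - a ^ 2)) (hx'0 : x' 0 = 0) :
    ∀ s ∈ I, (x s) ^ 2 ≤ 1 - a ^ 2 := by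
  obtain ⟨ha0, ha1⟩ := ha
  set c : ℝ := 1 - a ^ 2 with hc
  have hcpos : 0 < c := by nlinarith
  have hcne : c ≠ 0 := ne_of_gt hcpos
  set K : ℝ := 1 + 8 * a ^ 2 with hK
  have hK1 : 1 < K := by nlinarith
  set E : ℝ → ℝ := fun t => (x' t) ^ 2 - (c - (x t) ^ 2) * (K - (x t) ^ 2 / c)
    with hEdef
  -- E has derivative 0 on I
  have hE : ∀ t ∈ I, HasDerivAt E 0 t := by
    intro t ht
    have h1 := hx t ht
    have h2 := hx' t ht
    have hD : HasDerivAt E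
        (2 * x' t ^ 1 * x'' t -
          ((-(2 * x t ^ 1 * x' t)) * (K - (x t) ^ 2 / c) +
            (c - (x t) ^ 2) * (-(2 * x t ^ 1 * x' t / c)))) t := by
      exact ((h2.pow 2).sub (((((h1.pow 2)).const_sub c)).mul
        (((h1.pow 2).div_const c).const_sub K)))
    convert hD using 1
    rw [hODE t ht]
    field_simp
    ring
  -- E is constant, equal to E 0 = 0
  have hE0 : E 0 = 0 := by
    have hx02 : (x 0) ^ 2 = c := by
      rw [hx0, sq, Real.mul_self_sqrt hcpos.le]
    simp [hEdef, hx'0, hx02]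
  have hEconst : ∀ s ∈ I, E s = 0 := by
    intro s hs
    have hsub : Set.uIcc (0 : ℝ) s ⊆ I := hI.uIcc_subset h0 hs
    rcases le_total 0 s with h | h
    · have := constant_of_has_deriv_right_zero (f := E) (a := 0) (b := s)
        (fun t ht => (hE t (hsub (by rw [Set.uIcc_of_le h]; exact ht))).continuousAt.continuousWithinAt)
        (fun t ht => ((hE t (hsub (by rw [Set.uIcc_of_le h]; exact Set.Ico_subset_Icc_self ht))).hasDerivWithinAt))
        s (Set.right_mem_Icc.2 h)
      rw [this, hE0]
    · have := constant_of_has_deriv_right_zero (f := E) (a := s) (b := 0)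
        (fun t ht => (hE t (hsub (by rw [Set.uIcc_of_ge h]; exact ht))).continuousAt.continuousWithinAt)
        (fun t ht => ((hE t (hsub (by rw [Set.uIcc_of_ge h]; exact Set.Ico_subset_Icc_self ht))).hasDerivWithinAt))
        0 (Set.right_mem_Icc.2 h)
      have h0' := constant_of_has_deriv_right_zero (f := E) (a := s) (b := 0)
        (fun t ht => (hE t (hsub (by rw [Set.uIcc_of_ge h]; exact ht))).continuousAt.continuousWithinAt)
        (fun t ht => ((hE t (hsub (by rw [Set.uIcc_of_ge h]; exact Set.Ico_subset_Icc_self ht))).hasDerivWithinAt))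
      have e0 := h0' 0 (Set.right_mem_Icc.2 h)
      have es := h0' s (Set.left_mem_Icc.2 h)
      rw [es, ← e0, hE0]
  -- main argument
  intro s hs
  by_contra hcon
  push_neg at hcon
  -- hcon : c < x s ^ 2
  set v : ℝ := (c + min ((x s) ^ 2) (c * K)) / 2 with hv
  have hcK : c < c * K := by nlinarith
  have hcv : c < v := by
    have : c < min ((x s) ^ 2) (c * K) := lt_min hcon hcK
    rw [hv]; linarith
  have hvs : v < (x s) ^ 2 := by
    have : min ((x s) ^ 2) (c * K) ≤ (x s) ^ 2 := min_le_left _ _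
    rw [hv]; linarith
  have hvK : v < c * K := by
    have h1 : min ((x s) ^ 2) (c * K) ≤ c * K := min_le_right _ _
    rw [hv]; nlinarith [h1, hcK]
  have hsub : Set.uIcc (0 : ℝ) s ⊆ I := hI.uIcc_subset h0 hs
  have hgcont : ContinuousOn (fun t => (x t) ^ 2) (Set.uIcc 0 s) := by
    intro t ht
    exact ((hx t (hsub ht)).continuousAt.pow 2).continuousWithinAt
  have hx02 : (x 0) ^ 2 = c := by
    rw [hx0, sq, Real.mul_self_sqrt hcpos.le]
  have hmem : v ∈ Set.uIcc ((x 0) ^ 2) ((x s) ^ 2) := by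
    rw [hx02]
    exact Set.mem_uIcc.2 (Or.inl ⟨hcv.le, hvs.le⟩)
  obtain ⟨t, ht, hgt⟩ := intermediate_value_uIcc hgcont hmem
  have htI : t ∈ I := hsub ht
  have hEt := hEconst t htI
  simp only [hEdef] at hEt
  have hgt' : (x t) ^ 2 = v := hgt
  rw [hgt'] at hEt
  have hneg : (c - v) * (K - v / c) < 0 := by
    apply mul_neg_of_neg_of_pos
    · linarith
    · have : v / c < K := (div_lt_iff₀ hcpos).2 (by linarith [hvK])
      linarith
  nlinarith [sq_nonneg (x' t)]
end

section
/- Let a ∈ (0,1), let T > 0, and let x : ℝ → ℝ be twice differentiable on [0, T] with x''(s) = −2·(1 + 4a² − x(s)²/(1 − a²))·x(s) for all s ∈ [0, T], x(0) = √(1 − a²), and x'(0) = 0. If x(s) > 0 for all s ∈ [0, T], then x'(s) < 0 for all s ∈ (0, T]; in particular x is strictly decreasing on [0, T]. -/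
/-- **Strict monotonicity of the profile while positive.**
Let `a ∈ (0,1)`, `T > 0`, and let `x` solve `x'' = −2(1 + 4a² − x²/(1 − a²))·x` on
`[0, T]` with `x(0) = √(1 − a²)`, `x'(0) = 0`. If `x > 0` on `[0, T]`, then `x' < 0`
on `(0, T]`; in particular `x` is strictly decreasing on `[0, T]`. -/
theorem decoupled_ode_strict_decrease
    (a : ℝ) (ha : a ∈ Set.Ioo (0 : ℝ) 1) (T : ℝ) (hT : 0 < T)
    (x x' x'' : ℝ → ℝ)
    (hx : ∀ s ∈ Set.Icc (0 : ℝ) T, HasDerivAt x (x' s) s)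
    (hx' : ∀ s ∈ Set.Icc (0 : ℝ) T, HasDerivAt x' (x'' s) s)
    (hODE : ∀ s ∈ Set.Icc (0 : ℝ) T,
      x'' s = -2 * (1 + 4 * a ^ 2 - (x s) ^ 2 / (1 - a ^ 2)) * x s)
    (hx0 : x 0 = Real.sqrt (1 - a ^ 2)) (hx'0 : x' 0 = 0)
    (hpos : ∀ s ∈ Set.Icc (0 : ℝ) T, 0 < x s) :
    (∀ s ∈ Set.Ioc (0 : ℝ) T, x' s < 0) ∧ StrictAntiOn x (Set.Icc (0 : ℝ) T) := by
  obtain ⟨ha0, ha1⟩ := ha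
  set c : ℝ := 1 - a ^ 2 with hc_def
  have hc : 0 < c := by nlinarith
  set b : ℝ := 1 + 4 * a ^ 2 with hb_def
  have hb : 0 < b := by positivity
  -- the energy
  set E : ℝ → ℝ := fun s => (x' s) ^ 2 + 2 * b * (x s) ^ 2 - (x s) ^ 4 / c with hE_def
  have hEderiv : ∀ s ∈ Set.Icc (0 : ℝ) T, HasDerivAt E 0 s := by
    intro s hs
    have h1 := hx s hs
    have h2 := hx' s hs
    have hD : HasDerivAt E
        (2 * x' s ^ 1 * x'' s + 2 * b * (2 * x s ^ 1 * x' s)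
          - (4 * x s ^ 3 * x' s) / c) s := by
      exact (((h2.pow 2).add ((h1.pow 2).const_mul (2 * b))).sub
        ((h1.pow 4).div_const c))
    convert hD using 1
    rw [hODE s hs]
    field_simp
    ring
  have hcontE : ContinuousOn E (Set.Icc 0 T) := fun s hs =>
    (hEderiv s hs).continuousAt.continuousWithinAt
  have hconst : ∀ s ∈ Set.Icc (0 : ℝ) T, E s = E 0 := by
    intro s hs
    exact constant_of_has_deriv_right_zero hcontE
      (fun t ht => (hEderiv t (Set.Ico_subset_Icc_self ht)).hasDerivWithinAt) s hs
  have hE0 : E 0 = 2 * b * c - c := by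
    have hx02 : (x 0) ^ 2 = c := by
      rw [hx0, Real.sq_sqrt hc.le]
    have hx04 : (x 0) ^ 4 = c ^ 2 := by
      have : (x 0) ^ 4 = ((x 0) ^ 2) ^ 2 := by ring
      rw [this, hx02]
    simp only [hE_def, hx'0, hx02, hx04]
    field_simp
    ring
  -- pointwise energy inequality: V(x s ^ 2) ≤ E 0
  have hVle : ∀ s ∈ Set.Icc (0 : ℝ) T, 2 * b * (x s) ^ 2 - (x s) ^ 4 / c ≤ 2 * b * c - c := by
    intro s hs
    have := hconst s hs
    rw [hE0] at this
    simp only [hE_def] at this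
    nlinarith [sq_nonneg (x' s)]
  -- the amplitude bound
  have hbound : ∀ s ∈ Set.Icc (0 : ℝ) T, (x s) ^ 2 ≤ c := by
    intro s hs
    by_contra h
    push_neg at h
    have hs0 : (0 : ℝ) ≤ s := hs.1
    have hcont : ContinuousOn (fun t => (x t) ^ 2) (Set.Icc 0 s) := by
      intro t ht
      have : t ∈ Set.Icc (0 : ℝ) T := ⟨ht.1, le_trans ht.2 hs.2⟩
      exact ((hx t this).continuousAt.continuousWithinAt).pow 2
    set m : ℝ := min ((x s) ^ 2) (c * (1 + 4 * a ^ 2)) with hm_def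
    have hmgt : c < m := by
      apply lt_min h
      nlinarith [mul_pos hc (pow_pos ha0 2)]
    have hmle : m ≤ c * (1 + 4 * a ^ 2) := min_le_right _ _
    have hx02 : (x 0) ^ 2 = c := by rw [hx0, Real.sq_sqrt hc.le]
    have hmem : m ∈ Set.Icc ((x 0) ^ 2) ((x s) ^ 2) := by
      constructor
      · rw [hx02]; exact hmgt.le
      · exact min_le_left _ _
    obtain ⟨t, ht, hgt⟩ := intermediate_value_Icc hs0 hcont hmem
    have htT : t ∈ Set.Icc (0 : ℝ) T := ⟨ht.1, le_trans ht.2 hs.2⟩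
    have hV := hVle t htT
    have hgt' : (x t) ^ 2 = m := hgt
    have hgt4 : (x t) ^ 4 = m ^ 2 := by rw [show (x t)^4 = ((x t)^2)^2 from by ring, hgt']
    rw [hgt', hgt4] at hV
    have hV2 : 2 * b * m * c - m ^ 2 ≤ 2 * b * c ^ 2 - c ^ 2 := by
      have hmul := mul_le_mul_of_nonneg_right hV hc.le
      have hexp : (2 * b * m - m ^ 2 / c) * c = 2 * b * m * c - m ^ 2 := by
        field_simp
      rw [hexp] at hmul
      nlinarith [hmul]
    nlinarith [mul_pos (sub_pos.2 hmgt) (show (0:ℝ) < 2 * b * c - c - m by nlinarith)]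
  -- x'' < 0 on [0, T]
  have hxpp : ∀ s ∈ Set.Icc (0 : ℝ) T, x'' s < 0 := by
    intro s hs
    rw [hODE s hs]
    have h1 := hbound s hs
    have h2 := hpos s hs
    have hrho : 4 * a ^ 2 ≤ 1 + 4 * a ^ 2 - (x s) ^ 2 / c := by
      have : (x s) ^ 2 / c ≤ 1 := by
        rw [div_le_one hc]; exact h1
      linarith
    have : 0 < 1 + 4 * a ^ 2 - (x s) ^ 2 / c := by nlinarith
    nlinarith
  -- x' strictly decreasing
  have hcontx' : ContinuousOn x' (Set.Icc 0 T) := fun s hs =>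
    (hx' s hs).continuousAt.continuousWithinAt
  have hanti' : StrictAntiOn x' (Set.Icc 0 T) := by
    apply strictAntiOn_of_deriv_neg (convex_Icc 0 T) hcontx'
    intro s hs
    rw [interior_Icc] at hs
    have hsI : s ∈ Set.Icc (0 : ℝ) T := ⟨hs.1.le, hs.2.le⟩
    rw [(hx' s hsI).deriv]
    exact hxpp s hsI
  have hneg : ∀ s ∈ Set.Ioc (0 : ℝ) T, x' s < 0 := by
    intro s hs
    have := hanti' (Set.left_mem_Icc.2 hT.le) ⟨hs.1.le, hs.2⟩ hs.1
    rwa [hx'0] at this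
  refine ⟨hneg, ?_⟩
  have hcontx : ContinuousOn x (Set.Icc 0 T) := fun s hs =>
    (hx s hs).continuousAt.continuousWithinAt
  apply strictAntiOn_of_deriv_neg (convex_Icc 0 T) hcontx
  intro s hs
  rw [interior_Icc] at hs
  have hsI : s ∈ Set.Icc (0 : ℝ) T := ⟨hs.1.le, hs.2.le⟩
  rw [(hx s hsI).deriv]
  exact hneg s ⟨hs.1, hs.2.le⟩
end

section
/- Let a ∈ (0,1) and set S = π/(4·√2·a). Let x : ℝ → ℝ be twice differentiable on [0, S] with x''(s) = −2·(1 + 4a² − x(s)²/(1 − a²))·x(s) for all s ∈ [0, S], x(0) = √(1 − a²), and x'(0) = 0. Then there exists s₀ ∈ (0, S] with x(s₀) = 0. -/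
/-!
The energy `x'²/2 + (1 + 4a²)x² − x⁴/(2(1 − a²))` is conserved, and with the given initial
data it forces `x'² · (1 − a²) = (x² − (1 − a²))(x² − (1 − a²)(1 + 8a²))`. Hence `x²` never
enters the gap `(1 − a², (1 − a²)(1 + 8a²))`, and since it starts at `1 − a²` it stays
`≤ 1 − a²`. Where `x ≥ 0` this gives `x'' ≤ −8a² x`, and the Wronskian
`x' cos (ks) + k x sin (ks)`, `k = 2√2 a`, is then nonincreasing on `[0, π/(2k)]`; it vanishes
at `0` and equals `k x(π/(2k))` at the right end, so `x` cannot stay positive up to `π/(2k)`.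
-/

open Set Real

theorem IsPreconnected.le_of_forall_notMem_Ioo {X β : Type*} [TopologicalSpace X]
    [LinearOrder β] [TopologicalSpace β] [OrderClosedTopology β] [DenselyOrdered β]
    {s : Set X} (hs : IsPreconnected s) {f : X → β} (hf : ContinuousOn f s) {c d : β}
    (hcd : c < d) (hgap : ∀ t ∈ s, f t ∉ Ioo c d) {t₀ : X} (ht₀ : t₀ ∈ s) (hft₀ : f t₀ ≤ c) :
    ∀ t ∈ s, f t ≤ c := by
  intro t ht
  by_contra! hct
  have hdt : d ≤ f t := not_lt.mp fun hlt => hgap t ht ⟨hct, hlt⟩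
  obtain ⟨m, hcm, hmd⟩ := exists_between hcd
  obtain ⟨u, hu, hfu⟩ := hs.intermediate_value ht₀ ht hf ⟨hft₀.trans hcm.le, hmd.le.trans hdt⟩
  exact hgap u hu (hfu ▸ ⟨hcm, hmd⟩)

theorem IsPreconnected.lt_of_forall_ne {X β : Type*} [TopologicalSpace X]
    [LinearOrder β] [TopologicalSpace β] [OrderClosedTopology β]
    {s : Set X} (hs : IsPreconnected s) {f : X → β} (hf : ContinuousOn f s) {c : β}
    (hne : ∀ t ∈ s, f t ≠ c) {t₀ : X} (ht₀ : t₀ ∈ s) (hft₀ : c < f t₀) :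
    ∀ t ∈ s, c < f t := by
  intro t ht
  by_contra! htc
  obtain ⟨u, hu, hfu⟩ := hs.intermediate_value ht ht₀ hf ⟨htc, hft₀.le⟩
  exact hne u hu hfu

theorem energy_eq_of_deriv_deriv_eq_neg {a b : ℝ} {x x' x'' V g : ℝ → ℝ}
    (hx : ∀ s ∈ Icc a b, HasDerivAt x (x' s) s) (hx' : ∀ s ∈ Icc a b, HasDerivAt x' (x'' s) s)
    (hV : ∀ y, HasDerivAt V (g y) y) (hODE : ∀ s ∈ Icc a b, x'' s = -g (x s)) :
    ∀ s ∈ Icc a b, x' s ^ 2 / 2 + V (x s) = x' a ^ 2 / 2 + V (x a) := by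
  have hE : ∀ s ∈ Icc a b, HasDerivAt (fun t => x' t ^ 2 / 2 + V (x t)) 0 s := by
    intro s hs
    refine ((((hx' s hs).pow 2).div_const 2).add ((hV (x s)).comp s (hx s hs))).congr_deriv ?_
    rw [hODE s hs]
    ring
  exact constant_of_has_deriv_right_zero
    (fun s hs => (hE s hs).continuousAt.continuousWithinAt)
    (fun s hs => (hE s (Ico_subset_Icc_self hs)).hasDerivWithinAt)

theorem nonpos_of_deriv_deriv_le_neg_sq_mul {k T : ℝ} (hk : 0 < k) (hkT : k * T = π / 2)
    {x x' x'' : ℝ → ℝ} (hx : ∀ s ∈ Icc 0 T, HasDerivAt x (x' s) s)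
    (hx' : ∀ s ∈ Icc 0 T, HasDerivAt x' (x'' s) s)
    (hcmp : ∀ s ∈ Icc 0 T, x'' s ≤ -k ^ 2 * x s) (hx'0 : x' 0 = 0) : x T ≤ 0 := by
  have hT : 0 ≤ T := by nlinarith [pi_pos]
  set W : ℝ → ℝ := fun s => x' s * cos (k * s) + x s * (k * sin (k * s))
  have hW : ∀ s ∈ Icc 0 T, HasDerivAt W ((x'' s + k ^ 2 * x s) * cos (k * s)) s := by
    intro s hs
    have hks : HasDerivAt (fun t => k * t) k s := by simpa using (hasDerivAt_id s).const_mul k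
    refine (((hx' s hs).mul hks.cos).add ((hx s hs).mul (hks.sin.const_mul k))).congr_deriv ?_
    ring
  have hW' : ∀ s ∈ Ioo 0 T, (x'' s + k ^ 2 * x s) * cos (k * s) ≤ 0 := fun s hs =>
    mul_nonpos_of_nonpos_of_nonneg (by linarith [hcmp s (Ioo_subset_Icc_self hs)])
      (cos_nonneg_of_mem_Icc ⟨by nlinarith [pi_pos, hs.1], by nlinarith [hs.2]⟩)
  have hWanti : AntitoneOn W (Icc 0 T) :=
    antitoneOn_of_hasDerivWithinAt_nonpos (convex_Icc 0 T)
      (fun s hs => (hW s hs).continuousAt.continuousWithinAt)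
      (fun s hs => (hW s (interior_subset hs)).hasDerivWithinAt)
      (fun s hs => hW' s (by rwa [interior_Icc] at hs))
  have hWT : W T ≤ W 0 := hWanti (left_mem_Icc.mpr hT) (right_mem_Icc.mpr hT) hT
  simp only [W, hkT, cos_pi_div_two, sin_pi_div_two, mul_zero, hx'0, sin_zero,
    cos_zero, zero_add, mul_one] at hWT
  exact nonpos_of_mul_nonpos_left hWT hk

theorem decoupled_ode_sq_le {a S : ℝ} (ha : a ∈ Ioo (0 : ℝ) 1) {x x' x'' : ℝ → ℝ}
    (hx : ∀ s ∈ Icc (0 : ℝ) S, HasDerivAt x (x' s) s)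
    (hx' : ∀ s ∈ Icc (0 : ℝ) S, HasDerivAt x' (x'' s) s)
    (hODE : ∀ s ∈ Icc (0 : ℝ) S, x'' s = -2 * (1 + 4 * a ^ 2 - (x s) ^ 2 / (1 - a ^ 2)) * x s)
    (hx0 : x 0 = √(1 - a ^ 2)) (hx'0 : x' 0 = 0) :
    ∀ s ∈ Icc (0 : ℝ) S, x s ^ 2 ≤ 1 - a ^ 2 := by
  obtain ⟨ha0, ha1⟩ := ha
  set c := 1 - a ^ 2
  have hc : 0 < c := by nlinarith
  have hx0sq : x 0 ^ 2 = c := by rw [hx0, sq_sqrt hc.le]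
  have henergy := energy_eq_of_deriv_deriv_eq_neg hx hx'
    (V := fun y => (1 + 4 * a ^ 2) * y ^ 2 - y ^ 4 / (2 * c))
    (g := fun y => 2 * (1 + 4 * a ^ 2 - y ^ 2 / c) * y)
    (fun y => (((hasDerivAt_pow 2 y).const_mul _).sub
      ((hasDerivAt_pow 4 y).div_const _)).congr_deriv (by field_simp; ring))
    (fun s hs => by rw [hODE s hs]; ring)
  have hgap : ∀ t ∈ Icc 0 S, x t ^ 2 ∉ Ioo c (c * (1 + 8 * a ^ 2)) := by
    rintro t ht ⟨hlo, hhi⟩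
    have hEt := henergy t ht
    rw [hx'0, show x 0 ^ 4 = (x 0 ^ 2) ^ 2 by ring, hx0sq] at hEt
    have hfac : x' t ^ 2 * c = (x t ^ 2 - c) * (x t ^ 2 - c * (1 + 8 * a ^ 2)) := by
      field_simp at hEt
      linear_combination hEt
    nlinarith [mul_pos (sub_pos.mpr hlo) (sub_pos.mpr hhi), mul_nonneg (sq_nonneg (x' t)) hc.le]
  intro s hs
  exact isPreconnected_Icc.le_of_forall_notMem_Ioo
    (fun t ht => ((hx t ht).continuousAt.continuousWithinAt).pow 2)
    (by nlinarith [mul_pos hc (pow_pos ha0 2)]) hgap ⟨le_rfl, hs.1.trans hs.2⟩ hx0sq.le s hs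

/-- **The profile vanishes by time `π/(4√2·a)`.**
Let `a ∈ (0,1)` and `S = π/(4√2·a)`. If `x` solves
`x'' = −2(1 + 4a² − x²/(1 − a²))·x` on `[0, S]` with `x(0) = √(1 − a²)`, `x'(0) = 0`,
then `x` has a zero in `(0, S]`. -/
theorem decoupled_ode_has_zero
    (a : ℝ) (ha : a ∈ Set.Ioo (0 : ℝ) 1)
    (S : ℝ) (hS : S = Real.pi / (4 * Real.sqrt 2 * a))
    (x x' x'' : ℝ → ℝ)
    (hx : ∀ s ∈ Set.Icc (0 : ℝ) S, HasDerivAt x (x' s) s)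
    (hx' : ∀ s ∈ Set.Icc (0 : ℝ) S, HasDerivAt x' (x'' s) s)
    (hODE : ∀ s ∈ Set.Icc (0 : ℝ) S,
      x'' s = -2 * (1 + 4 * a ^ 2 - (x s) ^ 2 / (1 - a ^ 2)) * x s)
    (hx0 : x 0 = Real.sqrt (1 - a ^ 2)) (hx'0 : x' 0 = 0) :
    ∃ s₀ ∈ Set.Ioc (0 : ℝ) S, x s₀ = 0 := by
  have hbound := decoupled_ode_sq_le ha hx hx' hODE hx0 hx'0
  obtain ⟨ha0, ha1⟩ := ha
  have hc : 0 < 1 - a ^ 2 := by nlinarith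
  have hk : 0 < 2 * √2 * a := by positivity
  have hkS : 2 * √2 * a * S = π / 2 := by
    rw [hS]; field_simp; ring
  have hS0 : 0 < S := by rw [hS]; positivity
  by_contra! hne
  have hx0pos : 0 < x 0 := hx0 ▸ sqrt_pos.mpr hc
  have hx_ne : ∀ t ∈ Icc 0 S, x t ≠ 0 := fun t ht =>
    (eq_or_lt_of_le ht.1).elim (fun h => h ▸ hx0pos.ne') (fun h => hne t ⟨h, ht.2⟩)
  have hpos : ∀ s ∈ Icc 0 S, 0 < x s :=
    isPreconnected_Icc.lt_of_forall_ne (fun t ht => (hx t ht).continuousAt.continuousWithinAt)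
      hx_ne (left_mem_Icc.mpr hS0.le) hx0pos
  have hcmp : ∀ s ∈ Icc 0 S, x'' s ≤ -(2 * √2 * a) ^ 2 * x s := by
    intro s hs
    rw [hODE s hs, mul_pow, mul_pow, sq_sqrt zero_le_two]
    have hquot : x s ^ 2 / (1 - a ^ 2) ≤ 1 := (div_le_one hc).mpr (hbound s hs)
    nlinarith [hpos s hs]
  linarith [nonpos_of_deriv_deriv_le_neg_sq_mul hk hkS hx hx' hcmp hx'0,
    hpos S (right_mem_Icc.mpr hS0.le)]
end

section
/- Let a ∈ (0,1) and r ∈ (0, π/2) with cos r < √(1 − a²). Let x : ℝ → ℝ be twice differentiable on [0, ∞) with x''(s) = −2·(1 + 4a² − x(s)²/(1 − a²))·x(s) for all s ≥ 0, x(0) = √(1 − a²), and x'(0) = 0. Then there exists a unique s_r > 0 such that x(s_r) = cos r and x(s) > cos r for all s ∈ [0, s_r). -/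
/-!
The equation is `x'' = -V'(x)` with `V y = (1 + 4a²) y² - y⁴ / (2(1 - a²))`, so the energy
`x'²/2 + V(x)` is conserved; with the initial data this reads
`(1 - a²) x'² = (1 - a² - x²) ((1 - a²)(1 + 8a²) - x²)`.
Since `x(0)² = 1 - a²` and `x²` can never enter the gap between the two roots, `x² ≤ 1 - a²`
for all time. As long as `x > cos r` this gives `x'' ≤ -8a² cos r`, so `x` must reach `cos r`;
the first crossing time is the infimum of the set of times where `x ≤ cos r`.
-/

open Set

theorem ContinuousOn.existsUnique_first_eq {f : ℝ → ℝ} {t₀ c : ℝ}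
    (hf : ContinuousOn f (Ici t₀)) (h₀ : c < f t₀) (hhit : ∃ t ∈ Ici t₀, f t ≤ c) :
    ∃! s, t₀ < s ∧ f s = c ∧ ∀ u ∈ Ico t₀ s, c < f u := by
  set A := Ici t₀ ∩ f ⁻¹' Iic c
  have hA : IsClosed A := hf.preimage_isClosed_of_isClosed isClosed_Ici isClosed_Iic
  have hbdd : BddBelow A := ⟨t₀, fun t ht => ht.1⟩
  obtain ⟨hsA, hfs⟩ : sInf A ∈ A := hA.csInf_mem hhit hbdd
  have hlt : t₀ < sInf A := lt_of_le_of_ne hsA fun h => h₀.not_ge (h ▸ hfs)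
  have hbefore : ∀ u ∈ Ico t₀ (sInf A), c < f u := fun u hu =>
    not_le.1 fun hfu => (csInf_le hbdd ⟨hu.1, hfu⟩).not_gt hu.2
  have hfs_eq : f (sInf A) = c := by
    obtain ⟨t, ht, hft⟩ :=
      intermediate_value_Icc' hsA (hf.mono Icc_subset_Ici_self) ⟨hfs, h₀.le⟩
    rwa [le_antisymm ht.2 (csInf_le hbdd ⟨ht.1, hft.le⟩)] at hft
  refine ⟨sInf A, ⟨hlt, hfs_eq, hbefore⟩, fun y ⟨hy, hfy, hyb⟩ => ?_⟩
  rcases lt_trichotomy y (sInf A) with h | h | h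
  · exact absurd hfy (hbefore y ⟨hy.le, h⟩).ne'
  · exact h
  · exact absurd hfs_eq (hyb _ ⟨hlt.le, h⟩).ne'

theorem le_of_hasDerivAt_le_of_le {f f' g g' : ℝ → ℝ} {t₀ : ℝ}
    (hf : ∀ s ∈ Ici t₀, HasDerivAt f (f' s) s) (hg : ∀ s ∈ Ici t₀, HasDerivAt g (g' s) s)
    (h₀ : f t₀ ≤ g t₀) (hle : ∀ s ∈ Ici t₀, f' s ≤ g' s) : ∀ s ∈ Ici t₀, f s ≤ g s :=
  fun _ hs => image_le_of_deriv_right_le_deriv_boundary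
    (fun t ht => (hf t ht.1).continuousAt.continuousWithinAt)
    (fun t ht => (hf t ht.1).hasDerivWithinAt) h₀
    (fun t ht => (hg t ht.1).continuousAt.continuousWithinAt)
    (fun t ht => (hg t ht.1).hasDerivWithinAt) (fun t ht => hle t ht.1) ⟨hs, le_rfl⟩

theorem exists_le_of_second_deriv_le_neg {x x' x'' : ℝ → ℝ} {K : ℝ} (hK : 0 < K)
    (hx : ∀ s ∈ Ici 0, HasDerivAt x (x' s) s) (hx' : ∀ s ∈ Ici 0, HasDerivAt x' (x'' s) s)
    (hx'' : ∀ s ∈ Ici 0, x'' s ≤ -K) (c : ℝ) : ∃ s ∈ Ici 0, x s ≤ c := by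
  have hv : ∀ s ∈ Ici 0, x' s ≤ x' 0 - K * s :=
    le_of_hasDerivAt_le_of_le hx' (g := fun s => x' 0 - K * s) (g' := fun _ => -K)
      (fun s _ => by simpa using ((hasDerivAt_id s).const_mul K).const_sub (x' 0))
      (by simp) hx''
  have hpos : ∀ s ∈ Ici 0, x s ≤ x 0 + x' 0 * s - K * s ^ 2 / 2 :=
    le_of_hasDerivAt_le_of_le hx (g := fun s => x 0 + x' 0 * s - K * s ^ 2 / 2)
      (g' := fun s => x' 0 - K * s)
      (fun s _ => by
        refine ((((hasDerivAt_id s).const_mul (x' 0)).const_add (x 0)).sub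
          (((hasDerivAt_pow 2 s).const_mul K).div_const 2)).congr_deriv ?_
        push_cast; ring)
      (by simp) hv
  -- `K s² / 2 ≥ |x' 0| s + |x 0 - c|` at this `s`
  set s := 1 + 2 * (|x' 0| + |x 0 - c|) / K
  have hs : 1 ≤ s := le_add_of_nonneg_right (by positivity)
  have hKs : K * s = K + 2 * (|x' 0| + |x 0 - c|) := by
    simp only [s]; field_simp
  have hs₀ : s ∈ Ici 0 := mem_Ici.2 (by linarith)
  refine ⟨s, hs₀, (hpos s hs₀).trans ?_⟩
  nlinarith [le_abs_self (x' 0), le_abs_self (x 0 - c), abs_nonneg (x' 0), abs_nonneg (x 0 - c)]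

theorem energy_eq_of_hasDerivAt {x x' x'' V V' : ℝ → ℝ} {t₀ : ℝ}
    (hx : ∀ s ∈ Ici t₀, HasDerivAt x (x' s) s) (hx' : ∀ s ∈ Ici t₀, HasDerivAt x' (x'' s) s)
    (hV : ∀ y, HasDerivAt V (V' y) y) (hODE : ∀ s ∈ Ici t₀, x'' s = -V' (x s)) :
    ∀ s ∈ Ici t₀, x' s ^ 2 / 2 + V (x s) = x' t₀ ^ 2 / 2 + V (x t₀) := by
  have hE : ∀ s ∈ Ici t₀, HasDerivAt (fun t => x' t ^ 2 / 2 + V (x t)) 0 s := fun s hs => by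
    refine (((hx' s hs).pow 2).div_const 2 |>.add
      ((hV (x s)).comp s (hx s hs))).congr_deriv ?_
    rw [hODE s hs]; push_cast; ring
  exact fun s hs => constant_of_has_deriv_right_zero
    (fun t ht => (hE t ht.1).continuousAt.continuousWithinAt)
    (fun t ht => (hE t ht.1).hasDerivWithinAt) s ⟨hs, le_rfl⟩

theorem le_of_continuousOn_of_mul_nonneg {f : ℝ → ℝ} {t₀ b B : ℝ}
    (hf : ContinuousOn f (Ici t₀)) (hbB : b < B) (h₀ : f t₀ ≤ b)
    (h : ∀ s ∈ Ici t₀, 0 ≤ (b - f s) * (B - f s)) :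
    ∀ s ∈ Ici t₀, f s ≤ b := by
  intro s hs
  by_contra! hbs
  have hBs : B ≤ f s := by nlinarith [h s hs]
  obtain ⟨t, ht, hft⟩ := intermediate_value_Icc hs (hf.mono Icc_subset_Ici_self)
    (show (b + B) / 2 ∈ Icc (f t₀) (f s) from ⟨by linarith, by linarith⟩)
  have := h t ht.1
  rw [hft] at this
  nlinarith

/-- **Existence and uniqueness of the first crossing time of the level `cos r`.**
Let `a ∈ (0,1)` and `r ∈ (0, π/2)` with `cos r < √(1 − a²)`. If `x` solves
`x'' = −2(1 + 4a² − x²/(1 − a²))·x` on `[0, ∞)` with `x(0) = √(1 − a²)`, `x'(0) = 0`,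
then there is a unique `s_r > 0` with `x(s_r) = cos r` and `x > cos r` on `[0, s_r)`. -/
theorem decoupled_ode_first_crossing
    (a : ℝ) (ha : a ∈ Set.Ioo (0 : ℝ) 1)
    (r : ℝ) (hr : r ∈ Set.Ioo (0 : ℝ) (Real.pi / 2))
    (hcos : Real.cos r < Real.sqrt (1 - a ^ 2))
    (x x' x'' : ℝ → ℝ)
    (hx : ∀ s ∈ Set.Ici (0 : ℝ), HasDerivAt x (x' s) s)
    (hx' : ∀ s ∈ Set.Ici (0 : ℝ), HasDerivAt x' (x'' s) s)
    (hODE : ∀ s ∈ Set.Ici (0 : ℝ),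
      x'' s = -2 * (1 + 4 * a ^ 2 - (x s) ^ 2 / (1 - a ^ 2)) * x s)
    (hx0 : x 0 = Real.sqrt (1 - a ^ 2)) (hx'0 : x' 0 = 0) :
    ∃! sr : ℝ, 0 < sr ∧ x sr = Real.cos r ∧
      ∀ s ∈ Set.Ico (0 : ℝ) sr, Real.cos r < x s := by
  obtain ⟨ha₀, ha₁⟩ := ha
  set b := 1 - a ^ 2
  have hb : 0 < b := by nlinarith
  have hc : 0 < Real.cos r := Real.cos_pos_of_mem_Ioo ⟨by linarith [hr.1, Real.pi_pos], hr.2⟩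
  have hx0sq : x 0 ^ 2 = b := by rw [hx0, Real.sq_sqrt hb.le]
  have hcont : ContinuousOn x (Ici 0) := fun s hs => (hx s hs).continuousAt.continuousWithinAt
  have hfirst : ∀ s ∈ Ici 0, 0 ≤ (b - x s ^ 2) * (b * (1 + 8 * a ^ 2) - x s ^ 2) := by
    intro s hs
    have hE := energy_eq_of_hasDerivAt hx hx'
      (V := fun y => (1 + 4 * a ^ 2) * y ^ 2 - y ^ 4 / (2 * b))
      (V' := fun y => 2 * (1 + 4 * a ^ 2) * y - 2 * y ^ 3 / b)
      (fun y => (((hasDerivAt_pow 2 y).const_mul _).sub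
        ((hasDerivAt_pow 4 y).div_const _)).congr_deriv (by field_simp; ring))
      (fun s hs => by rw [hODE s hs]; ring) s hs
    rw [hx'0, show x 0 ^ 4 = (x 0 ^ 2) ^ 2 by ring, hx0sq] at hE
    calc 0 ≤ b * x' s ^ 2 := by positivity
      _ = _ := by field_simp at hE; linear_combination hE
  have hxb : ∀ s ∈ Ici 0, x s ^ 2 ≤ b :=
    le_of_continuousOn_of_mul_nonneg (hcont.pow 2) (by nlinarith [mul_pos hb (pow_pos ha₀ 2)])
      hx0sq.le hfirst
  have hhit : ∃ t ∈ Ici 0, x t ≤ Real.cos r := by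
    by_contra! habove
    have hx''_le : ∀ s ∈ Ici 0, x'' s ≤ -(8 * a ^ 2 * Real.cos r) := fun s hs => by
      have : x s ^ 2 / b ≤ 1 := (div_le_one hb).2 (hxb s hs)
      rw [hODE s hs]
      nlinarith [habove s hs]
    obtain ⟨s, hs, hxs⟩ :=
      exists_le_of_second_deriv_le_neg (by positivity) hx hx' hx''_le (Real.cos r)
    exact (habove s hs).not_ge hxs
  exact hcont.existsUnique_first_eq (hx0 ▸ hcos) hhit
end

section
/- For every r ∈ (0, π/2) there exists a unique a ∈ (0, √(3/8)) such that (3 − 4a²)·cos²r = (1 − a²)·(3 − 8a²). Moreover, this unique a satisfies cos r < √(1 − a²). -/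
private lemma aux_pos {x u v : ℝ} (hx : 0 < x) (h : x * u = v) (hv : 0 < v) :
    0 < u := by
  rcases mul_pos_iff.mp (h ▸ hv) with ⟨_, h2⟩ | ⟨h1, _⟩
  · exact h2
  · linarith

private lemma aux_final {C u : ℝ} (hu0 : 0 < u) (hu1 : u < 3 / 8)
    (h : (3 - 4 * u) * C = (1 - u) * (3 - 8 * u)) : C < 1 - u := by
  have h1 : (3 - 4 * u) * (1 - u - C) = 4 * u * (1 - u) := by linear_combination -h
  have h2 : 0 < 4 * u * (1 - u) := by nlinarith
  have h3 : (0:ℝ) < 3 - 4 * u := by linarith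
  have := aux_pos h3 h1 h2
  linarith

/-- **Existence and uniqueness of the parameter `a` for each cap radius `r`.**
For every `r ∈ (0, π/2)` there is a unique `a ∈ (0, √(3/8))` with
`(3 − 4a²)cos²r = (1 − a²)(3 − 8a²)`; moreover this unique `a` satisfies
`cos r < √(1 − a²)`. -/
theorem exists_unique_parameter
    (r : ℝ) (hr : r ∈ Set.Ioo (0 : ℝ) (Real.pi / 2)) :
    (∃! a : ℝ, a ∈ Set.Ioo (0 : ℝ) (Real.sqrt (3 / 8)) ∧
      (3 - 4 * a ^ 2) * Real.cos r ^ 2 = (1 - a ^ 2) * (3 - 8 * a ^ 2)) ∧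
    (∀ a : ℝ, a ∈ Set.Ioo (0 : ℝ) (Real.sqrt (3 / 8)) →
      (3 - 4 * a ^ 2) * Real.cos r ^ 2 = (1 - a ^ 2) * (3 - 8 * a ^ 2) →
      Real.cos r < Real.sqrt (1 - a ^ 2)) := by
  obtain ⟨hr0, hr2⟩ := hr
  have hpi := Real.pi_pos
  set c : ℝ := Real.cos r with hc
  have hcpos : 0 < c := Real.cos_pos_of_mem_Ioo ⟨by linarith, hr2⟩
  have hclt1 : c < 1 := by
    have := Real.cos_lt_cos_of_nonneg_of_le_pi (x := 0) (y := r) le_rfl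
      (by linarith) hr0
    simpa using this
  set C : ℝ := c ^ 2 with hC
  have hCpos : 0 < C := by positivity
  have hClt1 : C < 1 := by nlinarith
  -- the quadratic in t = a²:  8t² + (4C − 11)t + 3(1 − C) = 0
  set s : ℝ := Real.sqrt (16 * C ^ 2 + 8 * C + 25) with hsdef
  have hs_nonneg : 0 ≤ s := Real.sqrt_nonneg _
  have hs_sq : s ^ 2 = 16 * C ^ 2 + 8 * C + 25 := Real.sq_sqrt (by nlinarith)
  set t : ℝ := (11 - 4 * C - s) / 16 with htdef
  have hs_lt : s < 11 - 4 * C := by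
    nlinarith [hs_sq, hs_nonneg, hClt1, hCpos]
  have hs_gt : 5 - 4 * C < s := by
    nlinarith [hs_sq, hs_nonneg, hCpos]
  have ht_pos : 0 < t := by rw [htdef]; linarith
  have ht_lt : t < 3 / 8 := by rw [htdef]; linarith
  have ht_eq : 8 * t ^ 2 + (4 * C - 11) * t + 3 * (1 - C) = 0 := by
    rw [htdef]; field_simp; nlinarith [hs_sq]
  set a : ℝ := Real.sqrt t with hadef
  have ha_sq : a ^ 2 = t := Real.sq_sqrt ht_pos.le
  have ha_pos : 0 < a := Real.sqrt_pos.mpr ht_pos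
  have ha_lt : a < Real.sqrt (3 / 8) := by
    exact Real.sqrt_lt_sqrt ht_pos.le ht_lt
  -- a set membership implies a² ∈ (0, 3/8)
  have key : ∀ b : ℝ, b ∈ Set.Ioo (0 : ℝ) (Real.sqrt (3 / 8)) →
      0 < b ^ 2 ∧ b ^ 2 < 3 / 8 := by
    intro b ⟨hb0, hb1⟩
    refine ⟨by positivity, ?_⟩
    exact (Real.lt_sqrt hb0.le).mp hb1
  constructor
  · refine ⟨a, ⟨⟨ha_pos, ha_lt⟩, ?_⟩, ?_⟩
    · rw [ha_sq]; linear_combination -ht_eq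
    · rintro b ⟨⟨hb0, hb1⟩, hbeq⟩
      obtain ⟨hbsq0, hbsq1⟩ := key b ⟨hb0, hb1⟩
      have hbq : 8 * (b ^ 2) ^ 2 + (4 * C - 11) * b ^ 2 + 3 * (1 - C) = 0 := by
        linear_combination -hbeq
      have hsum : b ^ 2 = t := by
        have hfac : (b ^ 2 - t) * (8 * (b ^ 2 + t) + 4 * C - 11) = 0 := by
          linear_combination hbq - ht_eq
        have hneg : 8 * (b ^ 2 + t) + 4 * C - 11 < 0 := by nlinarith
        have := mul_eq_zero.mp hfac
        rcases this with h | h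
        · linarith
        · linarith
      have : b ^ 2 = a ^ 2 := by rw [ha_sq, hsum]
      have hfac2 : (b - a) * (b + a) = 0 := by linear_combination this
      rcases mul_eq_zero.mp hfac2 with h | h
      · linarith
      · linarith
  · intro b hb hbeq
    obtain ⟨hbsq0, hbsq1⟩ := key b hb
    have hClt : C < 1 - b ^ 2 := aux_final hbsq0 hbsq1 hbeq
    exact (Real.lt_sqrt hcpos.le).mpr hClt
end
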